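/- arXiv:1305.3447 — 3 statements merged into one kernel-verified Lean document; each statement's English description precedes it below -/
import Mathlib

section
/- Let (X,C,R) be a chemical reaction network with ℓ = t = 1 and deficiency δ = 1 such that the graph of complexes (C,R) is not strongly connected. Let h ∈ ℝ^c be a fixed vector with 0 ≠ h ∈ ker B ∩ ran I_κ and ∑_{i ∈ C''} h_i ≤ 0. Then there exists κ : R → ℝ_{>0} such that E^κ_+ ≠ ∅ if and only if ∑_{i ∈ C̃} h_i < 0 for every nonempty proper subset C̃ ⊊ C with ϱ^in(C̃) = ∅. -/
open Finset

/-- The matrix `I_κ ∈ ℝ^{c×c}` with `(I_κ)_{ji} = κ_{ij}` for `j ≠ i` and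
`(I_κ)_{ii} = −∑_{k≠i} κ_{ik}`. -/
noncomputable def Ikappa {c : ℕ} (κ : Fin c → Fin c → ℝ) : Matrix (Fin c) (Fin c) ℝ :=
  Matrix.of fun j i => if j = i then -∑ k ∈ Finset.univ.erase i, κ i k else κ i j

/-- `κ` is (the extension by zero of) a family of positive rate coefficients on `R`. -/
def ValidK {c : ℕ} (R : Finset (Fin c × Fin c)) (κ : Fin c → Fin c → ℝ) : Prop :=
  (∀ p ∈ R, 0 < κ p.1 p.2) ∧ ∀ p : Fin c × Fin c, p ∉ R → κ p.1 p.2 = 0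

/-- The monomial map `Θ : ℝ^n_{>0} → ℝ^c`, `Θ(x)_i = ∏_s x_s^{B_{si}}`. -/
noncomputable def Theta {n c : ℕ} (B : Matrix (Fin n) (Fin c) ℕ) (x : Fin n → ℝ) :
    Fin c → ℝ :=
  fun i => ∏ s, x s ^ B s i

/-- The set of positive steady states `E^κ_+` is nonempty. -/
def EposNonempty {n c : ℕ} (B : Matrix (Fin n) (Fin c) ℕ) (κ : Fin c → Fin c → ℝ) : Prop :=
  ∃ x : Fin n → ℝ, (∀ s, 0 < x s) ∧
    (B.map (Nat.cast : ℕ → ℝ)).mulVec ((Ikappa κ).mulVec (Theta B x)) = 0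

/-- The deficiency `δ = dim(ker B ∩ ran I_κ)` equals one. -/
def DeficiencyOneAt {n c : ℕ} (B : Matrix (Fin n) (Fin c) ℕ)
    (κ : Fin c → Fin c → ℝ) : Prop :=
  Module.finrank ℝ
    ↥(LinearMap.ker (Matrix.mulVecLin (B.map (Nat.cast : ℕ → ℝ))) ⊓
      LinearMap.range (Matrix.mulVecLin (Ikappa κ))) = 1

/-- Reachability (existence of a directed walk) in the directed graph with arc set `R`. -/
def Reach {c : ℕ} (R : Finset (Fin c × Fin c)) (a b : Fin c) : Prop :=
  Relation.ReflTransGen (fun x y => (x, y) ∈ R) a b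

/-- The set of arcs of `R` entering the vertex set `U`. -/
def arcsIn {c : ℕ} (R : Finset (Fin c × Fin c)) (U : Finset (Fin c)) :
    Finset (Fin c × Fin c) :=
  R.filter (fun a => a.1 ∉ U ∧ a.2 ∈ U)

/-!
The flux `I_κ Θ(x)` is the net inflow `A g` of the flow `g_{ij} = κ_{ij} Θ(x)_i` on the arcs,
where `A` is the incidence matrix; conversely a positive flow `g` is realised by `κ = g` at `x = 1`.

(⇒) At a positive steady state the flux lies in `ker B ∩ ran I_κ`, the line spanned by `h`, so it
is `r • h`. On a set `U` without incoming arcs the net inflow is minus the outflow, which is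
negative because weak connectivity forces an arc out of `U`. Taking `U = C''` gives `r > 0`,
and then `U = C̃` gives the claim.

(⇐) As `h ∈ ran A`, a separation argument (Stiemke's alternative) reduces `h = A g` with `g > 0`
to: every potential `y` that is non-increasing along arcs with `y ⬝ h ≥ 0` is constant. A
non-constant such `y` is, up to a constant, a positive combination of indicators of its
superlevel sets, which have no incoming arcs, so `y ⬝ h < 0`.
-/

open Finset Matrix

section Separation

variable {m ι : Type*} [Fintype m] [Fintype ι]

lemma nonpos_of_forall_pos_add_mul_lt {a b H : ℝ} (h : ∀ t > 0, b + t * a < H) : a ≤ 0 := by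
  by_contra! ha
  have := h ((|H - b| + 1) / a) (by positivity)
  rw [div_mul_cancel₀ _ ha.ne'] at this
  linarith [le_abs_self (H - b)]

lemma nonneg_of_forall_pos_mul_lt {a H : ℝ} (h : ∀ t > 0, t * a < H) : 0 ≤ H := by
  by_contra! hH
  have ha : a < 0 := by linarith [h 1 one_pos]
  have := h (H / (2 * a)) (div_pos_of_neg_of_neg hH (by linarith))
  rw [div_mul_eq_mul_div, mul_div_mul_right _ _ ha.ne] at this
  linarith

lemma exists_vecMul_dotProduct_lt_of_notMem (M : Matrix m ι ℝ) {h : m → ℝ}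
    (hh : h ∈ LinearMap.range M.mulVecLin) (hnot : ∀ g : ι → ℝ, (∀ i, 0 < g i) → M *ᵥ g ≠ h) :
    ∃ y : m → ℝ, ∀ g : ι → ℝ, (∀ i, 0 < g i) → y ᵥ* M ⬝ᵥ g < y ⬝ᵥ h := by
  classical
  let A : (ι → ℝ) →L[ℝ] LinearMap.range M.mulVecLin :=
    M.mulVecLin.rangeRestrict.toContinuousLinearMap
  let P : Set (ι → ℝ) := Set.univ.pi fun _ => Set.Ioi 0
  have hAP : IsOpen (A '' P) := A.isOpenMap M.mulVecLin.surjective_rangeRestrict _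
    (isOpen_set_pi Set.finite_univ fun _ _ => isOpen_Ioi)
  have hAPconv : Convex ℝ (A '' P) :=
    (convex_pi fun _ _ => convex_Ioi 0).linear_image A.toLinearMap
  have hhP : (⟨h, hh⟩ : LinearMap.range M.mulVecLin) ∉ A '' P := by
    rintro ⟨g, hg, hgh⟩
    exact hnot g (by simpa [P] using hg) (congrArg Subtype.val hgh)
  obtain ⟨f, hf⟩ := geometric_hahn_banach_open_point hAPconv hAP hhP
  obtain ⟨F, hF⟩ := LinearMap.exists_extend (f : LinearMap.range M.mulVecLin →ₗ[ℝ] ℝ)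
  set y : m → ℝ := fun j => F fun k => if j = k then 1 else 0
  have hFy : ∀ v, F v = y ⬝ᵥ v := fun v => by
    simp [LinearMap.pi_apply_eq_sum_univ F v, y, dotProduct, mul_comm]
  refine ⟨y, fun g hg => ?_⟩
  have := hf (A g) ⟨g, by simpa [P] using hg, rfl⟩
  have hfF : ∀ w, f w = F w := fun w => (LinearMap.congr_fun hF w).symm
  rw [hfF, hfF] at this
  simpa [hFy, A, dotProduct_mulVec] using this

theorem exists_pos_mulVec_eq (M : Matrix m ι ℝ) {h : m → ℝ}
    (hh : h ∈ LinearMap.range M.mulVecLin)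
    (hdual : ∀ y : m → ℝ, (∀ i, (y ᵥ* M) i ≤ 0) → 0 ≤ y ⬝ᵥ h → y ᵥ* M = 0 ∧ y ⬝ᵥ h = 0) :
    ∃ g : ι → ℝ, (∀ i, 0 < g i) ∧ M *ᵥ g = h := by
  classical
  by_contra! hnot
  obtain ⟨y, hy⟩ := exists_vecMul_dotProduct_lt_of_notMem M hh hnot
  have hw : ∀ i, (y ᵥ* M) i ≤ 0 := fun i => nonpos_of_forall_pos_add_mul_lt fun t ht => by
    have hpos : ∀ j, 0 < (1 + t • Pi.single i 1 : ι → ℝ) j := fun j => by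
      rcases eq_or_ne j i with rfl | hj <;> simp [*, add_pos]
    simpa [dotProduct_add, dotProduct_smul] using hy _ hpos
  have hH : 0 ≤ y ⬝ᵥ h := nonneg_of_forall_pos_mul_lt fun t ht => by
    simpa [dotProduct_smul] using hy (t • 1) fun _ => by simpa using ht
  obtain ⟨hw0, hH0⟩ := hdual y hw hH
  simpa [hw0, hH0] using hy 1 fun _ => one_pos

lemma dotProduct_eq_zero_of_forall_eq {h y : m → ℝ} (hsum : ∑ i, h i = 0)
    (hy : ∀ a b, y a = y b) : y ⬝ᵥ h = 0 := by
  rcases isEmpty_or_nonempty m with hm | ⟨⟨a⟩⟩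
  · simp [dotProduct]
  · rw [show y = fun _ => y a from funext fun j => hy j a]
    simp [dotProduct, ← mul_sum, hsum]

lemma dotProduct_eq_min_add_mul_sum (h : m → ℝ) {y : m → ℝ} {s t : ℝ} (hyt : ∀ j, y j ≤ t)
    (hys : ∀ j, y j ≠ t → y j ≤ s) (hst : s < t) :
    y ⬝ᵥ h = (fun j => min (y j) s) ⬝ᵥ h + (t - s) * ∑ i ∈ {j | t ≤ y j}, h i := by
  have hmin : ∀ j, min (y j) s = if t ≤ y j then y j - (t - s) else y j := fun j => by
    by_cases hj : t ≤ y j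
    · simp [le_antisymm (hyt j) hj, hst.le]
    · simp [hj, hys j fun h => hj h.ge]
  simp only [dotProduct, hmin, Finset.sum_filter, Finset.mul_sum, ← Finset.sum_add_distrib]
  refine Finset.sum_congr rfl fun j _ => ?_
  split_ifs <;> ring

end Separation

section Incidence

variable {V : Type*} [Fintype V] [DecidableEq V]

/-- `incidenceMatrix R *ᵥ g` is the net inflow at each vertex of the flow `g` on the arcs `R`. -/
def incidenceMatrix (R : Finset (V × V)) : Matrix V R ℝ :=
  Matrix.of fun j e => (if j = e.1.2 then 1 else 0) - if j = e.1.1 then 1 else 0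

lemma vecMul_incidenceMatrix (R : Finset (V × V)) (y : V → ℝ) :
    y ᵥ* incidenceMatrix R = fun e => y e.1.2 - y e.1.1 := by
  ext e
  simp [vecMul, dotProduct, incidenceMatrix, mul_sub]

lemma sum_eq_zero_of_mem_range_incidenceMatrix {R : Finset (V × V)} {h : V → ℝ}
    (hh : h ∈ LinearMap.range (incidenceMatrix R).mulVecLin) : ∑ i, h i = 0 := by
  obtain ⟨g, rfl⟩ := hh
  have := dotProduct_mulVec (fun _ => (1 : ℝ)) (incidenceMatrix R) g
  simpa [vecMul_incidenceMatrix, dotProduct] using this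

lemma sum_incidenceMatrix_mulVec (R : Finset (V × V)) (g : R → ℝ) (U : Finset V) :
    ∑ j ∈ U, (incidenceMatrix R *ᵥ g) j =
      ∑ e, ((if e.1.2 ∈ U then 1 else 0) - if e.1.1 ∈ U then 1 else 0) * g e := by
  have := dotProduct_mulVec (fun j => if j ∈ U then (1 : ℝ) else 0) (incidenceMatrix R) g
  simpa [vecMul_incidenceMatrix, dotProduct, Finset.sum_ite_mem] using this

end Incidence

section Network

variable {c : ℕ} {R : Finset (Fin c × Fin c)}

lemma Ikappa_mulVec_apply (κ : Fin c → Fin c → ℝ) (v : Fin c → ℝ) (j : Fin c) :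
    (Ikappa κ *ᵥ v) j = ∑ i, κ i j * v i - (∑ k, κ j k) * v j := by
  have hdiag : ∀ i, Ikappa κ j i = κ i j - if j = i then ∑ k, κ i k else 0 := fun i => by
    by_cases hji : j = i
    · subst hji; simp [Ikappa, Finset.sum_erase_eq_sub]
    · simp [Ikappa, hji]
  simp [mulVec, dotProduct, hdiag, sub_mul, Finset.sum_sub_distrib, ite_mul]

lemma Ikappa_mulVec_eq_incidenceMatrix_mulVec {κ : Fin c → Fin c → ℝ}
    (hκ : ∀ p, p ∉ R → κ p.1 p.2 = 0) (v : Fin c → ℝ) :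
    Ikappa κ *ᵥ v = incidenceMatrix R *ᵥ fun e => κ e.1.1 e.1.2 * v e.1.1 := by
  ext j
  rw [Ikappa_mulVec_apply]
  have hR : ∀ f : Fin c × Fin c → ℝ, (∀ p, p ∉ R → κ p.1 p.2 = 0 → f p = 0) →
      ∑ e : R, f e = ∑ p, f p := fun f hf =>
    (Finset.sum_coe_sort R f).trans
      (Finset.sum_subset (subset_univ R) fun p _ hp => hf p hp (hκ p hp))
  simp only [mulVec, dotProduct, incidenceMatrix, of_apply]
  rw [hR (fun p => ((if j = p.2 then 1 else 0) - if j = p.1 then 1 else 0) * (κ p.1 p.2 * v p.1))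
    (fun p _ h0 => by simp [h0])]
  simp [Fintype.sum_prod_type, sub_mul, Finset.sum_sub_distrib, ite_mul, Finset.sum_mul]

lemma sum_incidenceMatrix_mulVec_neg {U : Finset (Fin c)} (hU : arcsIn R U = ∅)
    {p : Fin c × Fin c} (hp : p ∈ R) (hpU : p.1 ∈ U ∧ p.2 ∉ U)
    {g : R → ℝ} (hg : ∀ e, 0 < g e) : ∑ j ∈ U, (incidenceMatrix R *ᵥ g) j < 0 := by
  have hnoin : ∀ e : R, e.1.1 ∉ U → e.1.2 ∉ U := fun e h1 h2 =>
    (Finset.eq_empty_iff_forall_notMem.1 hU) e (by simp [arcsIn, e.2, h1, h2])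
  rw [sum_incidenceMatrix_mulVec]
  refine lt_of_lt_of_eq (Finset.sum_lt_sum (g := fun _ => 0) (fun e _ => ?_)
    ⟨⟨p, hp⟩, mem_univ _, by simp [hpU, hg]⟩) Finset.sum_const_zero
  by_cases h1 : e.1.1 ∈ U
  · split_ifs <;> nlinarith [hg e]
  · simp [h1, hnoin e h1]

lemma exists_arc_out_of_arcsIn_eq_empty
    (hweak : ∀ a b : Fin c, Relation.ReflTransGen (fun x y => (x, y) ∈ R ∨ (y, x) ∈ R) a b)
    {U : Finset (Fin c)} (hU : arcsIn R U = ∅) (hne : U.Nonempty) (hne' : U ≠ univ) :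
    ∃ p ∈ R, p.1 ∈ U ∧ p.2 ∉ U := by
  by_contra! hout
  obtain ⟨a, ha⟩ := hne
  obtain ⟨b, hb⟩ : ∃ b, b ∉ U := by simpa [Finset.eq_univ_iff_forall] using hne'
  have hclosed : ∀ x y, (x, y) ∈ R ∨ (y, x) ∈ R → x ∈ U → y ∈ U := by
    rintro x y (hxy | hyx) hx
    · exact hout _ hxy hx
    · by_contra hy
      exact (Finset.eq_empty_iff_forall_notMem.1 hU) (y, x) (by simp [arcsIn, hyx, hx, hy])
  have hreach : ∀ x, Relation.ReflTransGen (fun x y => (x, y) ∈ R ∨ (y, x) ∈ R) a x → x ∈ U :=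
    fun x hx => by
      induction hx with
      | refl => exact ha
      | tail _ hxy ih => exact hclosed _ _ hxy ih
  exact hb (hreach b (hweak a b))

lemma arcsIn_superlevel_eq_empty {y : Fin c → ℝ} (hy : ∀ p ∈ R, y p.2 ≤ y p.1) (s : ℝ) :
    arcsIn R {j | s ≤ y j} = ∅ := by
  simp only [arcsIn, Finset.filter_eq_empty_iff, mem_filter, mem_univ, true_and, not_and, not_le]
  exact fun p hp hp1 => (hy p hp).trans_lt hp1

lemma dotProduct_neg_of_nonincreasing {h : Fin c → ℝ} (hsum : ∑ i, h i = 0)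
    (hlt : ∀ U : Finset (Fin c), U.Nonempty → U ≠ univ → arcsIn R U = ∅ → ∑ i ∈ U, h i < 0)
    {y : Fin c → ℝ} (hy : ∀ p ∈ R, y p.2 ≤ y p.1) (hnc : ∃ a b, y a ≠ y b) :
    y ⬝ᵥ h < 0 := by
  induction hN : (univ.image y).card using Nat.strong_induction_on generalizing y with
  | _ N ih =>
  obtain ⟨a, b, hab⟩ := hnc
  have hne : (univ.image y).Nonempty := ⟨y a, mem_image_of_mem y (mem_univ a)⟩
  set t := (univ.image y).max' hne
  have hyt : ∀ j, y j ≤ t := fun j => le_max' _ _ (mem_image_of_mem y (mem_univ j))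
  obtain ⟨k, hk⟩ : ∃ k, y k ≠ t := by
    by_contra! hall
    exact hab ((hall a).trans (hall b).symm)
  have hne' : ((univ.image y).erase t).Nonempty :=
    ⟨y k, mem_erase.2 ⟨hk, mem_image_of_mem y (mem_univ k)⟩⟩
  set s := ((univ.image y).erase t).max' hne'
  have hys : ∀ j, y j ≠ t → y j ≤ s := fun j hj =>
    le_max' _ _ (mem_erase.2 ⟨hj, mem_image_of_mem y (mem_univ j)⟩)
  have hst : s < t := by
    obtain ⟨hs, hsy⟩ := mem_erase.1 (max'_mem _ hne')
    obtain ⟨j, -, hj⟩ := mem_image.1 hsy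
    exact lt_of_le_of_ne (hj.symm.trans_le (hyt j)) hs
  set U : Finset (Fin c) := {j | t ≤ y j}
  have hU : ∑ i ∈ U, h i < 0 := by
    obtain ⟨j, -, hj⟩ := mem_image.1 (max'_mem _ hne)
    refine hlt U ⟨j, mem_filter.2 ⟨mem_univ j, hj.ge⟩⟩ (fun hU => ?_)
      (arcsIn_superlevel_eq_empty hy t)
    have hkU : k ∈ U := by rw [hU]; exact mem_univ k
    exact hk (le_antisymm (hyt k) (by simpa [U] using hkU))
  set y' : Fin c → ℝ := fun j => min (y j) s
  have hdecomp : y ⬝ᵥ h = y' ⬝ᵥ h + (t - s) * ∑ i ∈ U, h i :=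
    dotProduct_eq_min_add_mul_sum h hyt hys hst
  have hy' : y' ⬝ᵥ h ≤ 0 := by
    by_cases hc : ∀ a b, y' a = y' b
    · exact (dotProduct_eq_zero_of_forall_eq hsum hc).le
    · refine (ih _ ?_ (fun p hp => min_le_min_right s (hy p hp)) (by simpa using hc) rfl).le
      refine hN ▸ lt_of_le_of_lt (card_le_card fun v hv => ?_)
        (card_erase_lt_of_mem (max'_mem _ hne))
      obtain ⟨j, -, rfl⟩ := mem_image.1 hv
      by_cases hj : y j = t
      · simpa [y', hj, hst.le] using max'_mem _ hne'
      · simpa [y', hys j hj] using mem_erase.2 ⟨hj, mem_image_of_mem y (mem_univ j)⟩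
  linarith [mul_neg_of_pos_of_neg (sub_pos.2 hst) hU]

lemma mem_range_incidenceMatrix {h : Fin c → ℝ}
    (hran : ∀ κ : Fin c → Fin c → ℝ, ValidK R κ → ∃ v : Fin c → ℝ, (Ikappa κ).mulVec v = h) :
    h ∈ LinearMap.range (incidenceMatrix R).mulVecLin := by
  obtain ⟨v, hv⟩ := hran (fun i j => if (i, j) ∈ R then 1 else 0)
    ⟨fun p hp => by simp [hp], fun p hp => by simp [hp]⟩
  rw [Ikappa_mulVec_eq_incidenceMatrix_mulVec (R := R) (fun p hp => by simp [hp])] at hv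
  exact ⟨_, hv⟩

lemma exists_pos_incidenceMatrix_mulVec_eq {h : Fin c → ℝ}
    (hh : h ∈ LinearMap.range (incidenceMatrix R).mulVecLin)
    (hlt : ∀ U : Finset (Fin c), U.Nonempty → U ≠ univ → arcsIn R U = ∅ → ∑ i ∈ U, h i < 0) :
    ∃ g : R → ℝ, (∀ e, 0 < g e) ∧ incidenceMatrix R *ᵥ g = h := by
  have hsum := sum_eq_zero_of_mem_range_incidenceMatrix hh
  refine exists_pos_mulVec_eq _ hh fun y hy hyh => ?_
  simp only [vecMul_incidenceMatrix, sub_nonpos] at hy ⊢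
  have hconst : ∀ a b, y a = y b := by
    by_contra! hnc
    exact hyh.not_gt (dotProduct_neg_of_nonincreasing hsum hlt (fun p hp => hy ⟨p, hp⟩) hnc)
  exact ⟨funext fun e => by simp [hconst e.1.2 e.1.1], dotProduct_eq_zero_of_forall_eq hsum hconst⟩

lemma exists_validK_EposNonempty {n : ℕ} (B : Matrix (Fin n) (Fin c) ℕ) {g : R → ℝ}
    (hg : ∀ e, 0 < g e) (hB : (B.map (Nat.cast : ℕ → ℝ)) *ᵥ (incidenceMatrix R *ᵥ g) = 0) :
    ∃ κ : Fin c → Fin c → ℝ, ValidK R κ ∧ EposNonempty B κ := by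
  let κ : Fin c → Fin c → ℝ := fun i j => if hp : (i, j) ∈ R then g ⟨(i, j), hp⟩ else 0
  have hκ : ValidK R κ := ⟨fun p hp => by simp [κ, hp, hg], fun p hp => by simp [κ, hp]⟩
  refine ⟨κ, hκ, fun _ => 1, fun _ => one_pos, ?_⟩
  have hΘ : Theta B (fun _ => 1) = fun _ => 1 := by ext; simp [Theta]
  rw [hΘ, Ikappa_mulVec_eq_incidenceMatrix_mulVec hκ.2]
  simpa [κ] using hB

lemma exists_pos_flow_smul_eq {n : ℕ} {B : Matrix (Fin n) (Fin c) ℕ} {κ : Fin c → Fin c → ℝ}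
    (hκ : ValidK R κ) (hdef : DeficiencyOneAt B κ) {h : Fin c → ℝ} (hh0 : h ≠ 0)
    (hker : (B.map (Nat.cast : ℕ → ℝ)).mulVec h = 0)
    (hran : ∃ v : Fin c → ℝ, (Ikappa κ).mulVec v = h) (hE : EposNonempty B κ) :
    ∃ g : R → ℝ, (∀ e, 0 < g e) ∧ ∃ r : ℝ, r • h = incidenceMatrix R *ᵥ g := by
  obtain ⟨x, hx, hss⟩ := hE
  have hΘ : ∀ i, 0 < Theta B x i := fun i => prod_pos fun s _ => pow_pos (hx s) _
  refine ⟨fun e => κ e.1.1 e.1.2 * Theta B x e.1.1, fun e => mul_pos (hκ.1 _ e.2) (hΘ _), ?_⟩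
  rw [← Ikappa_mulVec_eq_incidenceMatrix_mulVec hκ.2]
  obtain ⟨v, hv⟩ := hran
  let W := LinearMap.ker (B.map (Nat.cast : ℕ → ℝ)).mulVecLin ⊓
    LinearMap.range (Ikappa κ).mulVecLin
  obtain ⟨r, hr⟩ := (finrank_eq_one_iff_of_nonzero' (⟨h, hker, v, hv⟩ : W)
    fun h0 => hh0 (congrArg Subtype.val h0)).1 hdef ⟨_, hss, Theta B x, rfl⟩
  exact ⟨r, congrArg Subtype.val hr⟩

end Network

theorem stmt8_general {n c : ℕ}
    (B : Matrix (Fin n) (Fin c) ℕ)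
    (R : Finset (Fin c × Fin c))
    -- `Cp` is the vertex set `C'` of the unique absorbing strong component (`ℓ = t = 1`):
    (Cp : Finset (Fin c)) (hCpne : Cp.Nonempty)
    (hCpstrong : ∀ a ∈ Cp, ∀ b ∈ Cp, Reach R a b)
    (hCpabs : ∀ p ∈ R, p.1 ∈ Cp → p.2 ∈ Cp)
    (hweak : ∀ a b : Fin c,
      Relation.ReflTransGen (fun x y => (x, y) ∈ R ∨ (y, x) ∈ R) a b)
    (hnsc : ¬ ∀ a b : Fin c, Reach R a b)
    (hdef : ∀ κ : Fin c → Fin c → ℝ, ValidK R κ → DeficiencyOneAt B κ)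
    (h : Fin c → ℝ) (hh0 : h ≠ 0)
    (hker : (B.map (Nat.cast : ℕ → ℝ)).mulVec h = 0)
    (hran : ∀ κ : Fin c → Fin c → ℝ, ValidK R κ →
      ∃ v : Fin c → ℝ, (Ikappa κ).mulVec v = h)
    (hCpp : ∑ i ∈ Finset.univ \ Cp, h i ≤ 0) :
    (∃ κ : Fin c → Fin c → ℝ, ValidK R κ ∧ EposNonempty B κ) ↔
      ∀ Ct : Finset (Fin c), Ct.Nonempty → Ct ≠ Finset.univ → arcsIn R Ct = ∅ →
        ∑ i ∈ Ct, h i < 0 := by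
  constructor
  · rintro ⟨κ, hκ, hE⟩
    obtain ⟨g, hg, r, hr⟩ := exists_pos_flow_smul_eq hκ (hdef κ hκ) hh0 hker (hran κ hκ) hE
    have hcut : ∀ U : Finset (Fin c), U.Nonempty → U ≠ univ → arcsIn R U = ∅ →
        r * ∑ i ∈ U, h i < 0 := fun U hne hne' hU => by
      obtain ⟨p, hp, hpU⟩ := exists_arc_out_of_arcsIn_eq_empty hweak hU hne hne'
      simpa [mul_sum, ← hr] using sum_incidenceMatrix_mulVec_neg hU hp hpU hg
    have hr0 : 0 < r := by
      refine pos_of_mul_neg_left (hcut _ ?_ ?_ ?_) hCpp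
      · exact sdiff_nonempty.2 fun hsub =>
          hnsc fun a b => hCpstrong a (hsub (mem_univ a)) b (hsub (mem_univ b))
      · obtain ⟨a, ha⟩ := hCpne
        exact fun heq => (mem_sdiff.1 (heq.symm ▸ mem_univ a : a ∈ univ \ Cp)).2 ha
      · simp only [arcsIn, filter_eq_empty_iff, mem_sdiff, mem_univ, true_and, not_not]
        exact fun p hp ⟨hp1, hp2⟩ => hp2 (hCpabs p hp hp1)
    exact fun Ct hne hne' hCt => neg_of_mul_neg_right (hcut Ct hne hne' hCt) hr0.le
  · intro hlt
    obtain ⟨g, hg, hgh⟩ :=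
      exists_pos_incidenceMatrix_mulVec_eq (mem_range_incidenceMatrix hran) hlt
    exact exists_validK_EposNonempty B hg (hgh ▸ hker)

theorem stmt8 {n c : ℕ}
    (B : Matrix (Fin n) (Fin c) ℕ)
    (R : Finset (Fin c × Fin c)) (hloop : ∀ v : Fin c, (v, v) ∉ R)
    -- `Cp` is the vertex set `C'` of the unique absorbing strong component (`ℓ = t = 1`):
    (Cp : Finset (Fin c)) (hCpne : Cp.Nonempty)
    (hCpstrong : ∀ a ∈ Cp, ∀ b ∈ Cp, Reach R a b)
    (hCpabs : ∀ p ∈ R, p.1 ∈ Cp → p.2 ∈ Cp)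
    (hweak : ∀ a b : Fin c,
      Relation.ReflTransGen (fun x y => (x, y) ∈ R ∨ (y, x) ∈ R) a b)
    (hT1 : ∀ k : Fin c, ∃ b ∈ Cp, Reach R k b)
    (hnsc : ¬ ∀ a b : Fin c, Reach R a b)
    (hdef : ∀ κ : Fin c → Fin c → ℝ, ValidK R κ → DeficiencyOneAt B κ)
    (h : Fin c → ℝ) (hh0 : h ≠ 0)
    (hker : (B.map (Nat.cast : ℕ → ℝ)).mulVec h = 0)
    (hran : ∀ κ : Fin c → Fin c → ℝ, ValidK R κ →
      ∃ v : Fin c → ℝ, (Ikappa κ).mulVec v = h)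
    (hCpp : ∑ i ∈ Finset.univ \ Cp, h i ≤ 0) :
    (∃ κ : Fin c → Fin c → ℝ, ValidK R κ ∧ EposNonempty B κ) ↔
      ∀ Ct : Finset (Fin c), Ct.Nonempty → Ct ≠ Finset.univ → arcsIn R Ct = ∅ →
        ∑ i ∈ Ct, h i < 0 :=
  stmt8_general B R Cp hCpne hCpstrong hCpabs hweak hnsc hdef h hh0 hker hran hCpp
end

section
/- Let (C,R) be a directed graph with ℓ = t = 1 that is not strongly connected and has |C'| = 1, and for i ∈ C'' let U(i) = {k ∈ C : every directed path from k to C' traverses i}. Then for all i, i' ∈ C'': (a) i ∈ U(i); (b) if i' ∈ U(i)\{i} then U(i') ⊆ U(i)\{i}; (c) if i ≠ i' then U(i) ⊊ U(i') or U(i) ⊋ U(i') or U(i) ∩ U(i') = ∅; and (d) every arc of R leaving U(i) has tail i, i.e., ϱ^out(U(i)) ⊆ ϱ^out({i}). -/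
open Finset

/-- `p` is a directed path in the graph with arc set `R`. -/
def IsDipath {c : ℕ} (R : Finset (Fin c × Fin c)) (p : List (Fin c)) : Prop :=
  p ≠ [] ∧ p.Nodup ∧ p.Chain' (fun a b => (a, b) ∈ R)

/-- `p` is a directed path from `a` to `b` in the graph with arc set `R`. -/
def IsDipathFromTo {c : ℕ} (R : Finset (Fin c × Fin c)) (p : List (Fin c))
    (a b : Fin c) : Prop :=
  IsDipath R p ∧ p.head? = some a ∧ p.getLast? = some b

/-- There is a directed path from `a` to `b` all of whose intermediate steps stay in `S`
(for `a ∈ S` this says that there is a directed path from `a` to `b` with vertex set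
contained in `S`). -/
def ReachIn {c : ℕ} (R : Finset (Fin c × Fin c)) (S : Finset (Fin c))
    (a b : Fin c) : Prop :=
  Relation.ReflTransGen (fun x y => (x, y) ∈ R ∧ x ∈ S ∧ y ∈ S) a b

/-- The set of arcs of `R` leaving the vertex set `U`. -/
def arcsOut {c : ℕ} (R : Finset (Fin c × Fin c)) (U : Finset (Fin c)) :
    Finset (Fin c × Fin c) :=
  R.filter (fun a => a.1 ∈ U ∧ a.2 ∉ U)

/-- For a graph whose unique absorbing strong component is `{r}` (so `C'' = C \ {r}`),
`Uset R r i = U(i) = {k ∈ C : every directed path from k to r traverses i}`. -/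
noncomputable def Uset {c : ℕ} (R : Finset (Fin c × Fin c)) (r i : Fin c) :
    Finset (Fin c) :=
  @Finset.filter _ (fun k => ∀ p : List (Fin c), IsDipathFromTo R p k r → i ∈ p)
    (Classical.decPred _) Finset.univ

/-- `U ∈ C''_{j-inarb}`: `U ⊆ C'' = C \ {r}`, every vertex of `U` has a directed path to
`j` with vertex set contained in `U`, and every vertex of `C'' \ U` has a directed path
to `C' = {r}` with vertex set contained in `C \ U`. -/
def Jinarb {c : ℕ} (R : Finset (Fin c × Fin c)) (r j : Fin c)
    (U : Finset (Fin c)) : Prop :=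
  U ⊆ Finset.univ.erase r ∧
    (∀ i' ∈ U, ReachIn R U i' j) ∧
    (∀ i' ∈ Finset.univ.erase r \ U, ReachIn R (Finset.univ \ U) i' r)

/-- The vertex set of the strong component of the graph containing `j`. -/
noncomputable def SCC {c : ℕ} (R : Finset (Fin c × Fin c)) (j : Fin c) :
    Finset (Fin c) :=
  @Finset.filter _ (fun k => Reach R j k ∧ Reach R k j) (Classical.decPred _) Finset.univ

/-- `I` is a subset of `C'' = C \ {r}` such that the sets `U(i)`, `i ∈ I`, are pairwise
disjoint with union `U`. -/
def IsPartitionInto {c : ℕ} (R : Finset (Fin c × Fin c)) (r : Fin c)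
    (U I : Finset (Fin c)) : Prop :=
  I ⊆ Finset.univ.erase r ∧
    (↑I : Set (Fin c)).PairwiseDisjoint (fun i => Uset R r i) ∧
    U = I.biUnion (Uset R r)

/-- `W(j) = ⋃_{U ∈ C''_{j-inarb}} I_U`, where `I_U` is the unique subset of `C''` with
`U = ⋃*_{i ∈ I_U} U(i)` (pairwise disjoint union). -/
def Wset {c : ℕ} (R : Finset (Fin c × Fin c)) (r j : Fin c) : Set (Fin c) :=
  {i | ∃ U I : Finset (Fin c), Jinarb R r j U ∧ IsPartitionInto R r U I ∧ i ∈ I}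

/-- `U(C''(j)) = {k ∈ C'' : every directed path from k to r traverses C''(j)}`. -/
noncomputable def UsetSC {c : ℕ} (R : Finset (Fin c × Fin c)) (r j : Fin c) :
    Finset (Fin c) :=
  @Finset.filter _
    (fun k => ∀ p : List (Fin c), IsDipathFromTo R p k r → ∃ x ∈ p, x ∈ SCC R j)
    (Classical.decPred _) (Finset.univ.erase r)

/-!
For `k ≠ i`, `k ∈ U(i)` says exactly that `r` cannot be reached from `k` by a walk that never
enters `i`: a walk shortens to a path on a subset of its vertices. Cutting walks at the last
visit to a vertex then gives transitivity of `U` and `i ∈ U(i') → i' ∈ U(i) → i = i'`,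
hence (b). For (c), if neither of `i, i'` lies in the set of the other, each reaches `r`
while avoiding the other, and then every vertex reaches `r` avoiding `i` or avoiding `i'`,
so `U(i) ∩ U(i') = ∅`. For (d), an arc `(x, y)` with `x ≠ i` and `y ∉ U(i)` would extend
a walk from `y` avoiding `i` to one from `x`.
-/

open Relation

section Walks

variable {α : Type*} {S : α → α → Prop}

def NotInto (S : α → α → Prop) (x : α) (u v : α) : Prop :=
  S u v ∧ v ≠ x

theorem Relation.ReflTransGen.exists_nodup_isChain {a b : α} (h : ReflTransGen S a b) :
    ∃ p : List α, p.Nodup ∧ p.IsChain S ∧ p.head? = some a ∧ p.getLast? = some b := by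
  induction h using ReflTransGen.head_induction_on with
  | refl => exact ⟨[b], List.nodup_singleton b, List.isChain_singleton b, rfl, rfl⟩
  | @head a y hay _ ih =>
    obtain ⟨q, hnd, hch, hhd, hlast⟩ := ih
    by_cases ha : a ∈ q
    · obtain ⟨s, t, rfl⟩ := List.append_of_mem ha
      exact ⟨a :: t, (List.nodup_append.1 hnd).2.1, hch.suffix (List.suffix_append s _), rfl,
        by rwa [List.getLast?_append_cons] at hlast⟩
    · obtain ⟨q, rfl⟩ := List.head?_eq_some_iff.1 hhd
      exact ⟨a :: y :: q, List.nodup_cons.2 ⟨ha, hnd⟩, List.isChain_cons_cons.2 ⟨hay, hch⟩,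
        rfl, by simpa using hlast⟩

/-- Cutting a walk from `a` to `b` at its last visit to `x`. -/
theorem Relation.ReflTransGen.notInto_or_notInto_from {a b : α} (h : ReflTransGen S a b)
    (x : α) : ReflTransGen (NotInto S x) a b ∨ ReflTransGen (NotInto S x) x b := by
  induction h with
  | refl => exact Or.inl .refl
  | @tail y z _ hyz ih =>
    by_cases hzx : z = x
    · exact Or.inr (hzx ▸ .refl)
    · exact ih.imp (·.tail ⟨hyz, hzx⟩) (·.tail ⟨hyz, hzx⟩)

theorem Relation.ReflTransGen.notInto_or_notInto {x y a b : α} (hne : x ≠ y)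
    (hx : ReflTransGen (NotInto S y) x b) (hy : ReflTransGen (NotInto S x) y b)
    (h : ReflTransGen S a b) :
    ReflTransGen (NotInto S x) a b ∨ ReflTransGen (NotInto S y) a b := by
  induction h using ReflTransGen.head_induction_on with
  | refl => exact Or.inl .refl
  | @head a z haz _ ih =>
    rcases ih with h | h
    · by_cases hz : z = x
      · exact Or.inr (.head ⟨haz, hz ▸ hne⟩ (hz ▸ hx))
      · exact Or.inl (.head ⟨haz, hz⟩ h)
    · by_cases hz : z = y
      · exact Or.inl (.head ⟨haz, hz ▸ hne.symm⟩ (hz ▸ hy))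
      · exact Or.inr (.head ⟨haz, hz⟩ h)

theorem NotInto.le (S : α → α → Prop) (x : α) : NotInto S x ≤ S :=
  fun _ _ h => h.1

theorem notInto_notInto_le_right (S : α → α → Prop) (x y : α) :
    NotInto (NotInto S x) y ≤ NotInto S y :=
  fun _ _ h => ⟨h.1.1, h.2⟩

end Walks

section Dominators

variable {c : ℕ} {R : Finset (Fin c × Fin c)} {r i i' k : Fin c}

local notation "Arc" => fun (x y : Fin c) => (x, y) ∈ R

theorem mem_Uset_iff : k ∈ Uset R r i ↔ k = i ∨ ¬ ReflTransGen (NotInto Arc i) k r := by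
  simp only [Uset, Finset.mem_filter, Finset.mem_univ, true_and]
  constructor
  · refine fun hk => or_iff_not_imp_left.2 fun hki hkr => ?_
    obtain ⟨p, hnd, hch, hhd, hlast⟩ := hkr.exists_nodup_isChain
    have hne : p ≠ [] := by rintro rfl; simp at hhd
    have hip := hk p ⟨⟨hne, hnd, hch.imp (NotInto.le _ _)⟩, hhd, hlast⟩
    obtain ⟨p, rfl⟩ := List.head?_eq_some_iff.1 hhd
    exact hch.cons_induction (· ≠ i) p (fun _ _ h _ => h.2) hki i
      ((List.mem_cons.1 hip).resolve_left (Ne.symm hki)) rfl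
  · rintro (rfl | hkr) p hp
    · exact List.mem_of_mem_head? hp.2.1
    · by_contra hi
      obtain ⟨⟨hne, -, hch⟩, hhd, hlast⟩ := hp
      have hch' : p.IsChain (NotInto Arc i) :=
        hch.imp_of_mem_imp fun _ _ _ hb h => ⟨h, ne_of_mem_of_not_mem hb hi⟩
      have := List.relationReflTransGen_of_exists_isChain p hch' hne
      rw [(List.head_eq_iff_head?_eq_some hne).2 hhd,
        (List.getLast_eq_iff_getLast?_eq_some hne).2 hlast] at this
      exact hkr this

theorem self_mem_Uset : i ∈ Uset R r i :=
  mem_Uset_iff.2 (Or.inl rfl)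

theorem mem_Uset_trans (h : i' ∈ Uset R r i) (hk : k ∈ Uset R r i') : k ∈ Uset R r i := by
  rw [mem_Uset_iff] at *
  rcases h with rfl | h
  · exact hk
  refine or_iff_not_imp_left.2 fun hki hkr => ?_
  rcases hk with rfl | hk
  · exact h hkr
  rcases hkr.notInto_or_notInto_from i' with hkr | hi'r
  · exact hk (ReflTransGen.mono (notInto_notInto_le_right _ _ _) _ _ hkr)
  · exact h (ReflTransGen.mono (NotInto.le _ _) _ _ hi'r)

theorem eq_of_mem_Uset_of_mem_Uset (hreach : Reach R i r) (h : i' ∈ Uset R r i)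
    (h' : i ∈ Uset R r i') : i = i' := by
  by_contra hne
  replace h := (mem_Uset_iff.1 h).resolve_left (Ne.symm hne)
  replace h' := (mem_Uset_iff.1 h').resolve_left hne
  rcases ReflTransGen.notInto_or_notInto_from hreach i' with hir | hi'r
  · exact h' hir
  rcases hi'r.notInto_or_notInto_from i with hi'r | hir
  · exact h (ReflTransGen.mono (notInto_notInto_le_right _ _ _) _ _ hi'r)
  · exact h' (ReflTransGen.mono (NotInto.le _ _) _ _ hir)

theorem Uset_subset_erase (hreach : Reach R i r) (h : i' ∈ Uset R r i) (hne : i' ≠ i) :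
    Uset R r i' ⊆ (Uset R r i).erase i := fun k hk =>
  Finset.mem_erase.2 ⟨by rintro rfl; exact hne (eq_of_mem_Uset_of_mem_Uset hreach h hk).symm,
    mem_Uset_trans h hk⟩

theorem Uset_ssubset (hreach : Reach R i r) (h : i' ∈ Uset R r i) (hne : i' ≠ i) :
    Uset R r i' ⊂ Uset R r i :=
  (Uset_subset_erase hreach h hne).trans_ssubset (Finset.erase_ssubset self_mem_Uset)

theorem mem_Uset_or_mem_Uset (hreach : Reach R k r) (hi : k ∈ Uset R r i)
    (hi' : k ∈ Uset R r i') : i ∈ Uset R r i' ∨ i' ∈ Uset R r i := by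
  by_contra! ⟨hii', hi'i⟩
  obtain ⟨hne, hir⟩ : i ≠ i' ∧ ReflTransGen (NotInto Arc i') i r := by
    simpa [mem_Uset_iff] using hii'
  obtain ⟨-, hi'r⟩ : i' ≠ i ∧ ReflTransGen (NotInto Arc i) i' r := by
    simpa [mem_Uset_iff] using hi'i
  rcases ReflTransGen.notInto_or_notInto hne hir hi'r hreach with h | h
  · obtain rfl := (mem_Uset_iff.1 hi).resolve_right (not_not_intro h)
    exact hii' hi'
  · obtain rfl := (mem_Uset_iff.1 hi').resolve_right (not_not_intro h)
    exact hi'i hi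

theorem arcsOut_Uset_subset : arcsOut R (Uset R r i) ⊆ arcsOut R {i} := by
  rintro ⟨x, y⟩ hxy
  simp only [arcsOut, Finset.mem_filter, Finset.mem_singleton] at hxy ⊢
  obtain ⟨hxyR, hx, hy⟩ := hxy
  obtain ⟨hyi, hyr⟩ : y ≠ i ∧ ReflTransGen (NotInto Arc i) y r := by
    simpa [mem_Uset_iff] using hy
  refine ⟨hxyR, by_contra fun hxi => ?_, hyi⟩
  exact (mem_Uset_iff.1 hx).resolve_left hxi (.head ⟨hxyR, hyi⟩ hyr)

end Dominators

theorem stmt11_general {c : ℕ}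
    (R : Finset (Fin c × Fin c))
    -- `{r} = C'` is the vertex set of the unique absorbing strong component (`ℓ = t = 1`):
    (r : Fin c)
    (hreach : ∀ k : Fin c, Reach R k r)
    :
    (∀ i : Fin c, i ≠ r → i ∈ Uset R r i) ∧
    (∀ i i' : Fin c, i ≠ r → i' ≠ r → i' ∈ Uset R r i → i' ≠ i →
      Uset R r i' ⊆ (Uset R r i).erase i) ∧
    (∀ i i' : Fin c, i ≠ r → i' ≠ r → i ≠ i' →
      Uset R r i ⊂ Uset R r i' ∨ Uset R r i' ⊂ Uset R r i ∨
        Uset R r i ∩ Uset R r i' = ∅) ∧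
    (∀ i : Fin c, i ≠ r → arcsOut R (Uset R r i) ⊆ arcsOut R {i}) := by
  refine ⟨fun i _ => self_mem_Uset, fun i i' _ _ h hne => Uset_subset_erase (hreach i) h hne,
    ?_, fun i _ => arcsOut_Uset_subset⟩
  intro i i' _ _ hne
  by_cases hdisj : Uset R r i ∩ Uset R r i' = ∅
  · exact Or.inr (Or.inr hdisj)
  obtain ⟨k, hk⟩ := Finset.nonempty_iff_ne_empty.2 hdisj
  rw [Finset.mem_inter] at hk
  rcases mem_Uset_or_mem_Uset (hreach k) hk.1 hk.2 with h | h
  · exact Or.inl (Uset_ssubset (hreach i') h hne)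
  · exact Or.inr (Or.inl (Uset_ssubset (hreach i) h hne.symm))

theorem stmt11 {c : ℕ}
    (R : Finset (Fin c × Fin c)) (hloop : ∀ v : Fin c, (v, v) ∉ R)
    -- `{r} = C'` is the vertex set of the unique absorbing strong component (`ℓ = t = 1`):
    (r : Fin c)
    (habs : ∀ p ∈ R, p.1 ≠ r)
    (hreach : ∀ k : Fin c, Reach R k r)
    (hweak : ∀ a b : Fin c,
      Relation.ReflTransGen (fun x y => (x, y) ∈ R ∨ (y, x) ∈ R) a b)
    (hnsc : ¬ ∀ a b : Fin c, Reach R a b)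
    :
    (∀ i : Fin c, i ≠ r → i ∈ Uset R r i) ∧
    (∀ i i' : Fin c, i ≠ r → i' ≠ r → i' ∈ Uset R r i → i' ≠ i →
      Uset R r i' ⊆ (Uset R r i).erase i) ∧
    (∀ i i' : Fin c, i ≠ r → i' ≠ r → i ≠ i' →
      Uset R r i ⊂ Uset R r i' ∨ Uset R r i' ⊂ Uset R r i ∨
        Uset R r i ∩ Uset R r i' = ∅) ∧
    (∀ i : Fin c, i ≠ r → arcsOut R (Uset R r i) ⊆ arcsOut R {i}) :=
  stmt11_general R r hreach
end

section
/- Let (C,R) be a directed graph with ℓ = t = 1 that is not strongly connected and has |C'| = 1. For i ∈ C'' let U(i) = {k ∈ C : every directed path from k to C' traverses i}, and for j ∈ C'' let C''_{j-inarb} be as defined below. Then: (a) U(j) ∈ C''_{j-inarb} for every j ∈ C''; and (b) for every j ∈ C'' and every U ∈ C''_{j-inarb} there exists a unique set I_U ⊆ C'' such that the sets {U(i) : i ∈ I_U} are pairwise disjoint and U = ⋃_{i ∈ I_U} U(i). -/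
open Finset

/-!
A vertex `k` lies in `U(i)` iff `k = i` or no walk from `k` to `r` avoids `i` (a walk can be
shortened to a path on a subset of its vertices). Hence `U(i) \ {i}` is closed under arcs, so
every walk from a vertex of `U(i)` to `r` passes through `i`; this gives (a), and
`U(i) ⊆ U(i')` whenever `i ∈ U(i')`. Following a walk to `r` from a common vertex of `U(i₁)` and
`U(i₂)` up to its first visit of `i₁` or `i₂` shows that the sets `U(i)` are laminar, and a
simple path from `i` to `r` shows that `i ∈ U(i')` and `i' ∈ U(i)` force `i = i'`. For
`U ∈ C''_{j-inarb}` one has `U(k) ⊆ U` for all `k ∈ U`, so `U` is the disjoint union of the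
`U(i)` over the maximal `i ∈ U`, and every such decomposition of `U` uses exactly these `i`.
-/

theorem List.exists_nodup_isChain_cons_of_relationReflTransGen {α : Type*}
    {s : α → α → Prop} {a b : α} (h : Relation.ReflTransGen s a b) :
    ∃ l, (a :: l).Nodup ∧ (a :: l).IsChain s ∧ (a :: l).getLast (cons_ne_nil _ _) = b := by
  induction h using Relation.ReflTransGen.head_induction_on with
  | refl => exact ⟨[], nodup_singleton _, .singleton _, rfl⟩
  | @head a c hac _ ih =>
    obtain ⟨l, hnd, hch, hlast⟩ := ih
    by_cases ha : a ∈ c :: l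
    · obtain ⟨s, t, hst⟩ := append_of_mem ha
      have hsuf : a :: t <:+ c :: l := ⟨s, hst.symm⟩
      refine ⟨t, hnd.sublist hsuf.sublist, hch.suffix hsuf, ?_⟩
      simp only [hst] at hlast
      rwa [getLast_append_of_right_ne_nil _ _ (cons_ne_nil _ _)] at hlast
    · exact ⟨c :: l, nodup_cons.2 ⟨ha, hnd⟩, .cons_cons hac hch, hlast⟩

section Paths

variable {c : ℕ} {R : Finset (Fin c × Fin c)}

lemma reachIn_univ_iff {a b : Fin c} : ReachIn R univ a b ↔ Reach R a b :=
  ⟨fun h => Relation.ReflTransGen.mono (fun _ _ hxy => hxy.1) _ _ h,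
    fun h => Relation.ReflTransGen.mono (fun _ _ hxy => ⟨hxy, mem_univ _, mem_univ _⟩) _ _ h⟩

lemma ReachIn.eq_of_notMem {S : Finset (Fin c)} {a b : Fin c} (h : ReachIn R S a b)
    (ha : a ∉ S) : a = b := by
  rcases Relation.ReflTransGen.cases_head h with rfl | ⟨_, hstep, _⟩
  · rfl
  · exact absurd hstep.2.1 ha

lemma ReachIn.restrict {S T : Finset (Fin c)} {a b : Fin c} (h : ReachIn R S a b)
    (ha : a ∈ S) (hT : ∀ x ∈ S, ReachIn R S x b → x ∈ T) : ReachIn R T a b := by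
  induction h using Relation.ReflTransGen.head_induction_on with
  | refl => exact .refl
  | @head x y hxy hyb ih =>
    exact .head ⟨hxy.1, hT x ha (hyb.head hxy), hT y hxy.2.2 hyb⟩ (ih hxy.2.2)

lemma IsDipathFromTo.suffix {s t : List (Fin c)} {a b x : Fin c}
    (hp : IsDipathFromTo R (s ++ x :: t) a b) : IsDipathFromTo R (x :: t) x b := by
  obtain ⟨⟨-, hnd, hch⟩, -, hlast⟩ := hp
  refine ⟨⟨List.cons_ne_nil _ _, hnd.sublist (List.sublist_append_right _ _),
    hch.right_of_append⟩, rfl, ?_⟩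
  simpa [List.getLast?_append] using hlast

lemma reachIn_of_isDipathFromTo {S : Finset (Fin c)} {p : List (Fin c)} {a b : Fin c}
    (hp : IsDipathFromTo R p a b) (hS : ∀ x ∈ p, x ∈ S) : ReachIn R S a b := by
  obtain ⟨⟨-, -, hch⟩, hhead, hlast⟩ := hp
  cases p with
  | nil => simp at hhead
  | cons a' l =>
    obtain rfl : a' = a := by simpa using hhead
    refine List.relationReflTransGen_of_exists_isChain_cons l
      (hch.imp_of_mem_imp fun x y hx hy hxy => ⟨hxy, hS x hx, hS y hy⟩) ?_
    simpa [List.getLast?_eq_some_getLast] using hlast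

lemma exists_isDipathFromTo_of_reachIn {S : Finset (Fin c)} {a b : Fin c}
    (h : ReachIn R S a b) (ha : a ∈ S) :
    ∃ l, IsDipathFromTo R (a :: l) a b ∧ ∀ x ∈ a :: l, x ∈ S := by
  obtain ⟨l, hnd, hch, hlast⟩ := List.exists_nodup_isChain_cons_of_relationReflTransGen h
  refine ⟨l, ⟨⟨List.cons_ne_nil _ _, hnd, hch.imp fun _ _ h => h.1⟩, rfl, ?_⟩, ?_⟩
  · rw [List.getLast?_eq_some_getLast (List.cons_ne_nil _ _), hlast]
  · exact List.forall_mem_cons.2 ⟨ha, hch.cons_induction _ _ (fun _ _ hxy _ => hxy.2.2) ha⟩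

end Paths

section Uset

variable {c : ℕ} {R : Finset (Fin c × Fin c)} {r : Fin c}

lemma mem_Uset_iff_s12 {i k : Fin c} :
    k ∈ Uset R r i ↔ ∀ p, IsDipathFromTo R p k r → i ∈ p := by
  simp [Uset]

lemma notMem_Uset_iff {i k : Fin c} :
    k ∉ Uset R r i ↔ k ≠ i ∧ ReachIn R (univ.erase i) k r := by
  simp only [mem_Uset_iff_s12, not_forall, exists_prop]
  constructor
  · rintro ⟨p, hp, hip⟩
    refine ⟨?_, reachIn_of_isDipathFromTo hp fun x hx => mem_erase.2 ⟨?_, mem_univ x⟩⟩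
    · rintro rfl
      exact hip (List.mem_of_mem_head? hp.2.1)
    · rintro rfl
      exact hip hx
  · rintro ⟨hki, h⟩
    obtain ⟨l, hp, hpS⟩ := exists_isDipathFromTo_of_reachIn h (mem_erase.2 ⟨hki, mem_univ k⟩)
    exact ⟨k :: l, hp, fun hi => (mem_erase.1 (hpS i hi)).1 rfl⟩

lemma mem_Uset_self (i : Fin c) : i ∈ Uset R r i := by
  by_contra h
  exact (notMem_Uset_iff.1 h).1 rfl

lemma eq_of_target_mem_Uset {i : Fin c} (h : r ∈ Uset R r i) : i = r := by
  by_contra hir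
  exact notMem_Uset_iff.2 ⟨Ne.symm hir, .refl⟩ h

lemma mem_Uset_of_arc {i x y : Fin c} (hxy : (x, y) ∈ R) (hx : x ∈ Uset R r i) (hxi : x ≠ i) :
    y ∈ Uset R r i := by
  by_contra hy
  obtain ⟨hyi, hyr⟩ := notMem_Uset_iff.1 hy
  exact notMem_Uset_iff.2
    ⟨hxi, .head ⟨hxy, mem_erase.2 ⟨hxi, mem_univ x⟩, mem_erase.2 ⟨hyi, mem_univ y⟩⟩ hyr⟩ hx

lemma reachIn_of_mem_Uset {S : Finset (Fin c)} {i k : Fin c} (hk : k ∈ Uset R r i)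
    (h : ReachIn R S k r) : ReachIn R S i r := by
  induction h using Relation.ReflTransGen.head_induction_on with
  | refl => exact eq_of_target_mem_Uset hk ▸ .refl
  | @head x y hxy hyr ih =>
    by_cases hxi : x = i
    · exact hxi ▸ hyr.head hxy
    · exact ih (mem_Uset_of_arc hxy.1 hk hxi)

lemma Uset_subset_Uset {i i' : Fin c} (h : i ∈ Uset R r i') : Uset R r i ⊆ Uset R r i' := by
  intro k hk
  by_contra hk'
  rcases eq_or_ne i i' with rfl | hii'
  · exact hk' hk
  · exact notMem_Uset_iff.2 ⟨hii', reachIn_of_mem_Uset hk (notMem_Uset_iff.1 hk').2⟩ h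

lemma reachIn_Uset_of_mem (hreach : ∀ k, Reach R k r) {j x : Fin c} (hjr : j ≠ r)
    (hx : x ∈ Uset R r j) : ReachIn R (Uset R r j) x j := by
  have hxr : Relation.ReflTransGen (fun a b => (a, b) ∈ R) x r := hreach x
  induction hxr using Relation.ReflTransGen.head_induction_on with
  | refl => exact absurd (eq_of_target_mem_Uset hx) hjr
  | @head x y hxy _ ih =>
    by_cases hxj : x = j
    · exact hxj ▸ .refl
    · have hy := mem_Uset_of_arc hxy hx hxj
      exact .head ⟨hxy, hx, hy⟩ (ih hy)

theorem jinarb_Uset (hreach : ∀ k, Reach R k r) {j : Fin c} (hjr : j ≠ r) :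
    Jinarb R r j (Uset R r j) := by
  refine ⟨fun k hk => mem_erase.2 ⟨?_, mem_univ k⟩,
    fun k hk => reachIn_Uset_of_mem hreach hjr hk, fun k hk => ?_⟩
  · rintro rfl
    exact hjr (eq_of_target_mem_Uset hk)
  · obtain ⟨hkj, hkr⟩ := notMem_Uset_iff.1 (mem_sdiff.1 hk).2
    refine hkr.restrict (mem_erase.2 ⟨hkj, mem_univ k⟩) fun x hx hxr => ?_
    exact mem_sdiff.2 ⟨mem_univ x, notMem_Uset_iff.2 ⟨(mem_erase.1 hx).1, hxr⟩⟩

lemma Uset_antisymm (hreach : ∀ k, Reach R k r) {i i' : Fin c} (h : i ∈ Uset R r i')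
    (h' : i' ∈ Uset R r i) : i = i' := by
  by_contra hne
  obtain ⟨l, hp, -⟩ :=
    exists_isDipathFromTo_of_reachIn (reachIn_univ_iff.2 (hreach i)) (mem_univ i)
  have hi'l : i' ∈ l := (List.mem_cons.1 (mem_Uset_iff_s12.1 h _ hp)).resolve_left (Ne.symm hne)
  obtain ⟨s, t, rfl⟩ := List.append_of_mem hi'l
  -- the part of the path after `i'` avoids `i`, because the path is simple
  have hit : i ∉ i' :: t := fun hi =>
    (List.nodup_cons.1 hp.1.2.1).1 (List.mem_append_right s hi)
  exact hit (mem_Uset_iff_s12.1 h' _ (hp.suffix (s := i :: s)))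

lemma Uset_laminar (hreach : ∀ k, Reach R k r) {k i₁ i₂ : Fin c} (h₁ : k ∈ Uset R r i₁)
    (h₂ : k ∈ Uset R r i₂) : i₁ ∈ Uset R r i₂ ∨ i₂ ∈ Uset R r i₁ := by
  have hk : Relation.ReflTransGen (fun a b => (a, b) ∈ R) k r := hreach k
  induction hk using Relation.ReflTransGen.head_induction_on with
  | refl => exact .inl (eq_of_target_mem_Uset h₁ ▸ h₂)
  | @head x y hxy _ ih =>
    by_cases hx₁ : x = i₁
    · exact .inl (hx₁ ▸ h₂)
    by_cases hx₂ : x = i₂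
    · exact .inr (hx₂ ▸ h₁)
    exact ih (mem_Uset_of_arc hxy h₁ hx₁) (mem_Uset_of_arc hxy h₂ hx₂)

lemma Uset_subset_of_jinarb {j k : Fin c} {U : Finset (Fin c)} (hU : Jinarb R r j U)
    (hk : k ∈ U) : Uset R r k ⊆ U := by
  intro m hm
  by_contra hmU
  have hkr : k ≠ r := (mem_erase.1 (hU.1 hk)).1
  have hmr : m ≠ r := by
    rintro rfl
    exact hkr (eq_of_target_mem_Uset hm)
  have hm_reach := hU.2.2 m (mem_sdiff.2 ⟨mem_erase.2 ⟨hmr, mem_univ m⟩, hmU⟩)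
  exact hkr ((reachIn_of_mem_Uset hm hm_reach).eq_of_notMem fun h => (mem_sdiff.1 h).2 hk)

variable (R r) in
noncomputable def maxIndices (U : Finset (Fin c)) : Finset (Fin c) :=
  U.filter fun i => ∀ i' ∈ U, i ∈ Uset R r i' → i' = i

lemma exists_mem_maxIndices (hreach : ∀ k, Reach R k r) {U : Finset (Fin c)} {k : Fin c}
    (hk : k ∈ U) : ∃ i ∈ maxIndices R r U, k ∈ Uset R r i := by
  obtain ⟨i, hi, hmax⟩ := (U.filter (k ∈ Uset R r ·)).exists_max_image (fun i => #(Uset R r i))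
    ⟨k, mem_filter.2 ⟨hk, mem_Uset_self k⟩⟩
  obtain ⟨hiU, hki⟩ := mem_filter.1 hi
  refine ⟨i, mem_filter.2 ⟨hiU, fun i' hi' hii' => ?_⟩, hki⟩
  have hsub := Uset_subset_Uset hii'
  have heq : Uset R r i = Uset R r i' :=
    eq_of_subset_of_card_le hsub (hmax i' (mem_filter.2 ⟨hi', hsub hki⟩))
  exact Uset_antisymm hreach (heq ▸ mem_Uset_self i') hii'

lemma isPartitionInto_maxIndices (hreach : ∀ k, Reach R k r) {j : Fin c}
    {U : Finset (Fin c)} (hU : Jinarb R r j U) : IsPartitionInto R r U (maxIndices R r U) := by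
  have hsub : maxIndices R r U ⊆ U := filter_subset _ _
  have hmax : ∀ i ∈ maxIndices R r U, ∀ i' ∈ U, i ∈ Uset R r i' → i' = i :=
    fun i hi => (mem_filter.1 hi).2
  refine ⟨hsub.trans hU.1, fun i₁ h₁ i₂ h₂ hne => ?_, ?_⟩
  · refine disjoint_left.2 fun k hk₁ hk₂ => hne ?_
    rcases Uset_laminar hreach hk₁ hk₂ with h | h
    · exact (hmax i₁ h₁ i₂ (hsub h₂) h).symm
    · exact hmax i₂ h₂ i₁ (hsub h₁) h
  · refine Subset.antisymm (fun k hk => mem_biUnion.2 (exists_mem_maxIndices hreach hk)) ?_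
    exact biUnion_subset.2 fun i hi => Uset_subset_of_jinarb hU (hsub hi)

lemma IsPartitionInto.eq_maxIndices (hreach : ∀ k, Reach R k r) {U I : Finset (Fin c)}
    (hI : IsPartitionInto R r U I) : I = maxIndices R r U := by
  obtain ⟨-, hdisj, rfl⟩ := hI
  ext i
  simp only [maxIndices, mem_filter]
  constructor
  · intro hi
    refine ⟨mem_biUnion.2 ⟨i, hi, mem_Uset_self i⟩, fun i' hi' hii' => ?_⟩
    obtain ⟨i'', hi'', hi'i''⟩ := mem_biUnion.1 hi'
    obtain rfl : i'' = i := by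
      by_contra hne
      exact disjoint_left.1 (hdisj (mem_coe.2 hi'') (mem_coe.2 hi) hne)
        (Uset_subset_Uset hi'i'' hii') (mem_Uset_self i)
    exact Uset_antisymm hreach hi'i'' hii'
  · rintro ⟨hiU, hmax⟩
    obtain ⟨i', hi', hii'⟩ := mem_biUnion.1 hiU
    exact hmax i' (mem_biUnion.2 ⟨i', hi', mem_Uset_self i'⟩) hii' ▸ hi'

end Uset

theorem stmt12_general {c : ℕ}
    (R : Finset (Fin c × Fin c))
    -- `{r} = C'` is the vertex set of the unique absorbing strong component (`ℓ = t = 1`):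
    (r : Fin c)
    (hreach : ∀ k : Fin c, Reach R k r)
    :
    (∀ j : Fin c, j ≠ r → Jinarb R r j (Uset R r j)) ∧
    (∀ j : Fin c, j ≠ r → ∀ U : Finset (Fin c), Jinarb R r j U →
      ∃! I : Finset (Fin c), IsPartitionInto R r U I) :=
  ⟨fun _ hjr => jinarb_Uset hreach hjr, fun _ _ U hU =>
    ⟨maxIndices R r U, isPartitionInto_maxIndices hreach hU, fun _ hI => hI.eq_maxIndices hreach⟩⟩

theorem stmt12 {c : ℕ}
    (R : Finset (Fin c × Fin c)) (hloop : ∀ v : Fin c, (v, v) ∉ R)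
    -- `{r} = C'` is the vertex set of the unique absorbing strong component (`ℓ = t = 1`):
    (r : Fin c)
    (habs : ∀ p ∈ R, p.1 ≠ r)
    (hreach : ∀ k : Fin c, Reach R k r)
    (hweak : ∀ a b : Fin c,
      Relation.ReflTransGen (fun x y => (x, y) ∈ R ∨ (y, x) ∈ R) a b)
    (hnsc : ¬ ∀ a b : Fin c, Reach R a b)
    :
    (∀ j : Fin c, j ≠ r → Jinarb R r j (Uset R r j)) ∧
    (∀ j : Fin c, j ≠ r → ∀ U : Finset (Fin c), Jinarb R r j U →
      ∃! I : Finset (Fin c), IsPartitionInto R r U I) :=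
  stmt12_general R r hreach
end
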